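/- arXiv:2104.12216 — 2 statements merged into one kernel-verified Lean document; each statement's English description precedes it below -/
import Mathlib

section
/- For all positive reals λ and λ', the series Σ_{k=0}^∞ (1−λ')_k/(k!(λ+k)) converges and equals the beta function B(λ,λ') = ∫₀¹ s^(λ-1)(1-s)^(λ'-1) ds. -/
open MeasureTheory

/-- The beta function `B(a,b) = ∫₀¹ s^(a-1) (1-s)^(b-1) ds`. -/
noncomputable def betaFn (a b : ℝ) : ℝ := ∫ s in (0:ℝ)..1, s ^ (a - 1) * (1 - s) ^ (b - 1)

/-- The regularized incomplete beta function `I(a,b;t)`. -/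
noncomputable def regIncBeta (a b t : ℝ) : ℝ :=
  (betaFn a b)⁻¹ * ∫ s in (0:ℝ)..t, s ^ (a - 1) * (1 - s) ^ (b - 1)

/-- `ℬ(λ,λ',μ,μ',ν,ν') = (1/B(λ,λ')) ∫₀¹ t^(λ-1)(1-t)^(λ'-1) I(μ,μ';t) I(ν,ν';t) dt`. -/
noncomputable def calB (l l' m m' n n' : ℝ) : ℝ :=
  (betaFn l l')⁻¹ * ∫ t in (0:ℝ)..1,
    t ^ (l - 1) * (1 - t) ^ (l' - 1) * regIncBeta m m' t * regIncBeta n n' t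

/-- The Pochhammer symbol (rising factorial) `(a)_k = a(a+1)⋯(a+k-1)`. -/
noncomputable def poch (a : ℝ) (k : ℕ) : ℝ := ∏ i ∈ Finset.range k, (a + i)

/-- The hypergeometric value `₃F₂(a₁,a₂,a₃; b₁,b₂; 1)`. -/
noncomputable def F32 (a1 a2 a3 b1 b2 : ℝ) : ℝ :=
  ∑' k : ℕ, poch a1 k * poch a2 k * poch a3 k / (poch b1 k * poch b2 k * (Nat.factorial k))

/-!
Expand `(1 - s) ^ (λ' - 1) = ∑ (1 - λ')ₖ sᵏ / k!` by the binomial series and integrate termwise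
against `s ^ (λ - 1)` over `(0, 1]`; the `k`-th term integrates to `(1 - λ')ₖ / (k! (λ + k))`.
The interchange of sum and integral is justified by monotone convergence: for `k ≥ ⌈λ'⌉` all
factors `1 - λ' + i` of `(1 - λ')ₖ` are nonnegative, so the coefficients eventually have
constant sign.
-/

open Filter Topology Set

lemma poch_eq_ascPochhammer_eval (a : ℝ) (n : ℕ) : poch a n = (ascPochhammer ℝ n).eval a := by
  induction n with
  | zero => simp [poch]
  | succ n ih => rw [poch, Finset.prod_range_succ, ← poch, ih, ascPochhammer_succ_eval]

lemma choose_add_sub_one_eq_poch_div_factorial (a : ℝ) (n : ℕ) :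
    Ring.choose (a + n - 1) n = poch a n / n.factorial := by
  rw [Ring.choose_eq_smul, Polynomial.descPochhammer_smeval_eq_ascPochhammer,
    Polynomial.ascPochhammer_smeval_eq_eval, poch_eq_ascPochhammer_eval, smul_eq_mul,
    inv_mul_eq_div]
  ring_nf

lemma hasSum_poch_div_factorial_mul_pow (a : ℝ) {s : ℝ} (hs : |s| < 1) :
    HasSum (fun k => poch a k / k.factorial * s ^ k) ((1 - s) ^ (-a)) := by
  have h := (Real.one_div_one_sub_rpow_hasFPowerSeriesOnBall_zero a).hasSum
    (y := s) (by simpa [enorm_eq_nnnorm, ← NNReal.coe_lt_coe] using hs)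
  simp only [FormalMultilinearSeries.ofScalars_apply_eq, choose_add_sub_one_eq_poch_div_factorial,
    smul_eq_mul, zero_add] at h
  rwa [one_div, ← Real.rpow_neg (by linarith [le_abs_self s])] at h

lemma poch_add (a : ℝ) (m n : ℕ) : poch a (m + n) = poch a m * poch (a + m) n := by
  simp only [poch, Finset.prod_range_add, Nat.cast_add, add_assoc]

lemma poch_nonneg {a : ℝ} (ha : 0 ≤ a) (n : ℕ) : 0 ≤ poch a n :=
  Finset.prod_nonneg fun i _ => by positivity

lemma exists_ne_zero_forall_mul_poch_nonneg {a : ℝ} {K : ℕ} (hK : 0 ≤ a + K) :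
    ∃ ε : ℝ, ε ≠ 0 ∧ ∀ k, K ≤ k → 0 ≤ ε * poch a k := by
  refine ⟨if 0 ≤ poch a K then 1 else -1, by split_ifs <;> norm_num, fun k hk => ?_⟩
  obtain ⟨m, rfl⟩ := Nat.exists_eq_add_of_le hk
  rw [poch_add, ← mul_assoc]
  refine mul_nonneg ?_ (poch_nonneg hK m)
  split_ifs with h <;> linarith

lemma hasSum_of_tendsto_of_eventually_nonneg {f : ℕ → ℝ} {x : ℝ} {K : ℕ}
    (hf : ∀ k, K ≤ k → 0 ≤ f k) (h : Tendsto (fun n => ∑ i ∈ Finset.range n, f i) atTop (𝓝 x)) :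
    HasSum f x := by
  rw [← hasSum_nat_add_iff' K, hasSum_iff_tendsto_nat_of_nonneg fun i => hf _ (by omega)]
  refine ((tendsto_add_atTop_iff_nat K).mpr h).sub_const _ |>.congr fun n => ?_
  rw [add_comm n K, Finset.sum_range_add, add_sub_cancel_left]
  simp only [add_comm]

lemma hasSum_integral_of_eventually_nonneg {α : Type*} [MeasurableSpace α] {μ : Measure α}
    {f : ℕ → α → ℝ} {F : α → ℝ} (hf : ∀ n, Integrable (f n) μ) (hF : Integrable F μ)
    (hsum : ∀ᵐ x ∂μ, HasSum (fun n => f n x) (F x)) {K : ℕ}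
    (hpos : ∀ n, K ≤ n → 0 ≤ᵐ[μ] f n) :
    HasSum (fun n => ∫ x, f n x ∂μ) (∫ x, F x ∂μ) := by
  have hmono : ∀ᵐ x ∂μ, Monotone fun n => ∑ i ∈ Finset.range (n + K), f i x := by
    have : ∀ᵐ x ∂μ, ∀ n, 0 ≤ f (n + K) x := ae_all_iff.2 fun n => hpos _ (by omega)
    filter_upwards [this] with x hx
    refine monotone_nat_of_le_succ fun n => ?_
    rw [show n + 1 + K = n + K + 1 by omega, Finset.sum_range_succ]
    linarith [hx n]
  have hlim := integral_tendsto_of_tendsto_of_monotone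
    (fun n => integrable_finsetSum _ fun i _ => hf i) hF hmono
    (by filter_upwards [hsum] with x hx using
      (tendsto_add_atTop_iff_nat K).mpr hx.tendsto_sum_nat)
  refine hasSum_of_tendsto_of_eventually_nonneg (K := K)
    (fun n hn => integral_nonneg_of_ae (hpos n hn)) ((tendsto_add_atTop_iff_nat K).mp ?_)
  simpa only [integral_finsetSum _ fun i _ => hf i] using hlim

lemma rpow_sub_one_mul_pow_eqOn (l : ℝ) (k : ℕ) :
    EqOn (fun s : ℝ => s ^ (l - 1) * s ^ k) (fun s => s ^ (l + k - 1)) (Ioi 0) := fun s hs => by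
  dsimp only
  rw [add_sub_right_comm, Real.rpow_add_natCast (ne_of_gt hs)]

lemma integrableOn_rpow_sub_one_mul_pow {l : ℝ} (hl : 0 < l) (k : ℕ) :
    IntegrableOn (fun s : ℝ => s ^ (l - 1) * s ^ k) (Ioc 0 1) := by
  have h := (intervalIntegrable_iff_integrableOn_Ioc_of_le zero_le_one).mp
    (intervalIntegral.intervalIntegrable_rpow' (r := l + k - 1)
      (by linarith [k.cast_nonneg' (α := ℝ)]))
  exact h.congr_fun ((rpow_sub_one_mul_pow_eqOn l k).mono Ioc_subset_Ioi_self).symm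
    measurableSet_Ioc

lemma integral_rpow_sub_one_mul_pow {l : ℝ} (hl : 0 < l) (k : ℕ) :
    ∫ s in Ioc (0 : ℝ) 1, s ^ (l - 1) * s ^ k = 1 / (l + k) := by
  have hlk : 0 < l + k := by positivity
  rw [setIntegral_congr_fun measurableSet_Ioc
      ((rpow_sub_one_mul_pow_eqOn l k).mono Ioc_subset_Ioi_self),
    ← intervalIntegral.integral_of_le zero_le_one, integral_rpow (Or.inl (by linarith)),
    sub_add_cancel, Real.one_rpow, Real.zero_rpow hlk.ne', sub_zero]

lemma integrableOn_rpow_mul_one_sub_rpow {a b : ℝ} (ha : 0 < a) (hb : 0 < b) :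
    IntegrableOn (fun s : ℝ => s ^ (a - 1) * (1 - s) ^ (b - 1)) (Ioc 0 1) := by
  have h := (integrableOn_Ioc_iff_integrableOn_Ioo).mp
    ((intervalIntegrable_iff_integrableOn_Ioc_of_le zero_le_one).mp
      (Complex.betaIntegral_convergent (u := a) (v := b) (by simpa) (by simpa))).norm
  refine (integrableOn_Ioc_iff_integrableOn_Ioo).mpr <|
    h.congr (ae_restrict_of_forall_mem measurableSet_Ioo fun s hs => ?_)
  have h1s : (1 : ℂ) - s = ((1 - s : ℝ) : ℂ) := by push_cast; rfl
  dsimp only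
  rw [norm_mul, h1s, Complex.norm_cpow_eq_rpow_re_of_pos hs.1,
    Complex.norm_cpow_eq_rpow_re_of_pos (sub_pos.mpr hs.2)]
  simp

/-- `Σ_{k=0}^∞ (1−λ')_k/(k!(λ+k))` converges to `B(λ,λ')`. -/
theorem stmt7 (l l' : ℝ) (hl : 0 < l) (hl' : 0 < l') :
    HasSum (fun k : ℕ => poch (1 - l') k / ((Nat.factorial k) * (l + k)))
      (betaFn l l') := by
  obtain ⟨ε, hε, hsign⟩ := exists_ne_zero_forall_mul_poch_nonneg (a := 1 - l') (K := ⌈l'⌉₊)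
    (by linarith [Nat.le_ceil l'])
  have hseries : ∀ᵐ s ∂volume.restrict (Ioc 0 1),
      HasSum (fun k => ε * (poch (1 - l') k / k.factorial) * (s ^ (l - 1) * s ^ k))
        (ε * (s ^ (l - 1) * (1 - s) ^ (l' - 1))) := by
    rw [← Measure.restrict_congr_set Ioo_ae_eq_Ioc]
    refine ae_restrict_of_forall_mem measurableSet_Ioo fun s hs => ?_
    have h := hasSum_poch_div_factorial_mul_pow (1 - l') (abs_lt.mpr ⟨by linarith [hs.1], hs.2⟩)
    rw [neg_sub] at h
    simpa only [mul_assoc, mul_left_comm] using h.mul_left (ε * s ^ (l - 1))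
  have hnonneg : ∀ k, ⌈l'⌉₊ ≤ k → 0 ≤ᵐ[volume.restrict (Ioc 0 1)]
      fun s => ε * (poch (1 - l') k / k.factorial) * (s ^ (l - 1) * s ^ k) := fun k hk =>
    ae_restrict_of_forall_mem measurableSet_Ioc fun s hs => by
      have hs0 := hs.1.le
      rw [← mul_div_assoc]
      exact mul_nonneg (div_nonneg (hsign k hk) k.factorial.cast_nonneg) (by positivity)
  have h := hasSum_integral_of_eventually_nonneg
    (fun k => (integrableOn_rpow_sub_one_mul_pow hl k).const_mul _)
    ((integrableOn_rpow_mul_one_sub_rpow hl hl').const_mul ε) hseries hnonneg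
  simp only [integral_const_mul, integral_rpow_sub_one_mul_pow hl, mul_one_div, mul_div_assoc,
    div_div] at h
  rw [betaFn, intervalIntegral.integral_of_le zero_le_one]
  exact (hasSum_mul_left_iff hε).mp h
end

section
/- For all positive reals μ and μ', ∫₀¹ I(μ,μ';t)² dt = (1/(μ+μ')) · (μ' − 2 B(2μ, 2μ')/B(μ,μ')²). Equivalently, for independent Y, Z ~ Beta(μ,μ'), E[max{Y,Z}] = μ/(μ+μ') + 2 B(2μ,2μ')/((μ+μ') B(μ,μ')²). -/
/-! Write `f(t) = t^(a-1) (1-t)^(b-1)`, `B = B(a,b)` and `F = I(a,b;·)`, so that `F' = f/B`,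
`F 0 = 0` and `F 1 = 1`. The fundamental theorem of calculus applied to `F²`, `t F²` and
`t^a (1-t)^b F` gives
* `∫₀¹ f F = B/2`,
* `∫₀¹ F² = 1 - (2/B) ∫₀¹ t f F`,
* `(a+b) ∫₀¹ t f F = a ∫₀¹ f F + B(2a,2b)/B`,
the last because `(t^a (1-t)^b)' = (a - (a+b) t) f` and `t^a (1-t)^b f = t^(2a-1) (1-t)^(2b-1)`,
while the boundary terms vanish. Eliminating the two auxiliary integrals gives the formula. -/

open MeasureTheory

open intervalIntegral Set

noncomputable def betaIntegrand (a b x : ℝ) : ℝ := x ^ (a - 1) * (1 - x) ^ (b - 1)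

lemma betaFn_eq_integral (a b : ℝ) : betaFn a b = ∫ x in (0:ℝ)..1, betaIntegrand a b x := rfl

section BetaIntegrand

variable {a b : ℝ}

lemma continuousOn_betaIntegrand : ContinuousOn (betaIntegrand a b) (Ioo 0 1) := fun _ hx =>
  ((Real.continuousAt_rpow_const _ _ (Or.inl hx.1.ne')).mul
    ((Real.continuousAt_rpow_const _ _ (Or.inl (sub_pos.2 hx.2).ne')).comp
      (continuous_const.sub continuous_id).continuousAt)).continuousWithinAt

lemma intervalIntegrable_betaIntegrand (ha : 0 < a) (hb : 0 < b) :
    IntervalIntegrable (betaIntegrand a b) volume 0 1 := by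
  have hleft : IntervalIntegrable (betaIntegrand a b) volume 0 (1 / 2) := by
    refine (intervalIntegrable_rpow' (by linarith : -1 < a - 1)).mul_continuousOn ?_
    rw [uIcc_of_le (by norm_num)]
    exact fun _ hx => ((Real.continuousAt_rpow_const _ _
      (Or.inl (sub_pos.2 (by linarith [hx.2])).ne')).comp
      (continuous_const.sub continuous_id).continuousAt).continuousWithinAt
  have hright : IntervalIntegrable (betaIntegrand a b) volume (1 / 2) 1 := by
    have h := ((intervalIntegrable_rpow' (a := 0) (b := 1 / 2)
      (by linarith : -1 < b - 1)).comp_sub_left 1).symm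
    norm_num at h
    refine IntervalIntegrable.continuousOn_mul h ?_
    rw [uIcc_of_le (by norm_num)]
    exact fun _ hx => (Real.continuousAt_rpow_const _ _
      (Or.inl (by linarith [hx.1]))).continuousWithinAt
  exact hleft.trans hright

lemma betaFn_pos (ha : 0 < a) (hb : 0 < b) : 0 < betaFn a b :=
  intervalIntegral_pos_of_pos_on (intervalIntegrable_betaIntegrand ha hb)
    (fun _ hx => mul_pos (Real.rpow_pos_of_pos hx.1 _) (Real.rpow_pos_of_pos (sub_pos.2 hx.2) _))
    zero_lt_one

lemma regIncBeta_zero (a b : ℝ) : regIncBeta a b 0 = 0 := by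
  simp [regIncBeta]

lemma regIncBeta_one (h : betaFn a b ≠ 0) : regIncBeta a b 1 = 1 :=
  inv_mul_cancel₀ h

lemma continuousOn_regIncBeta (ha : 0 < a) (hb : 0 < b) :
    ContinuousOn (regIncBeta a b) (Icc 0 1) := by
  have h := continuousOn_primitive_interval' (intervalIntegrable_betaIntegrand ha hb)
    (left_mem_uIcc (a := 0) (b := 1))
  rw [uIcc_of_le zero_le_one] at h
  exact h.const_smul (betaFn a b)⁻¹

lemma hasDerivAt_regIncBeta (ha : 0 < a) (hb : 0 < b) {x : ℝ} (hx : x ∈ Ioo 0 1) :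
    HasDerivAt (regIncBeta a b) ((betaFn a b)⁻¹ * betaIntegrand a b x) x := by
  have hint : IntervalIntegrable (betaIntegrand a b) volume 0 x :=
    (intervalIntegrable_betaIntegrand ha hb).mono_set
      (by rw [uIcc_of_le hx.1.le, uIcc_of_le zero_le_one]; exact Icc_subset_Icc_right hx.2.le)
  exact (integral_hasDerivAt_right hint
    (continuousOn_betaIntegrand.stronglyMeasurableAtFilter isOpen_Ioo x hx)
    (continuousOn_betaIntegrand.continuousAt (isOpen_Ioo.mem_nhds hx))).const_mul _

lemma hasDerivAt_rpow_mul_one_sub_rpow {x : ℝ} (hx : x ∈ Ioo 0 1) :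
    HasDerivAt (fun t => t ^ a * (1 - t) ^ b) ((a - (a + b) * x) * betaIntegrand a b x) x := by
  have hx' : 0 < 1 - x := sub_pos.2 hx.2
  have h := ((hasDerivAt_id' x).rpow_const (p := a) (Or.inl hx.1.ne')).mul
    (((hasDerivAt_id' x).const_sub 1).rpow_const (p := b) (Or.inl hx'.ne'))
  refine h.congr_deriv ?_
  have e₁ : x ^ a = x * x ^ (a - 1) := by
    conv_lhs => rw [← add_sub_cancel 1 a, Real.rpow_add hx.1, Real.rpow_one]
  have e₂ : (1 - x) ^ b = (1 - x) * (1 - x) ^ (b - 1) := by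
    conv_lhs => rw [← add_sub_cancel 1 b, Real.rpow_add hx', Real.rpow_one]
  rw [betaIntegrand, e₁, e₂]
  ring

lemma betaIntegrand_two_mul {x : ℝ} (hx : x ∈ Ioo 0 1) :
    betaIntegrand (2 * a) (2 * b) x = x ^ a * (1 - x) ^ b * betaIntegrand a b x := by
  have hx' : 0 < 1 - x := sub_pos.2 hx.2
  rw [betaIntegrand, betaIntegrand, show 2 * a - 1 = a + (a - 1) by ring,
    show 2 * b - 1 = b + (b - 1) by ring, Real.rpow_add hx.1, Real.rpow_add hx']
  ring

end BetaIntegrand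

section Integrals

variable {a b : ℝ}

lemma intervalIntegrable_betaIntegrand_mul_regIncBeta (ha : 0 < a) (hb : 0 < b) :
    IntervalIntegrable (fun x => betaIntegrand a b x * regIncBeta a b x) volume 0 1 :=
  (intervalIntegrable_betaIntegrand ha hb).mul_continuousOn
    (by rw [uIcc_of_le zero_le_one]; exact continuousOn_regIncBeta ha hb)

lemma integral_betaIntegrand_mul_regIncBeta (ha : 0 < a) (hb : 0 < b) :
    ∫ x in (0:ℝ)..1, betaIntegrand a b x * regIncBeta a b x = betaFn a b / 2 := by
  have hB := (betaFn_pos ha hb).ne'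
  have hderiv : ∀ x ∈ Ioo (0:ℝ) 1, HasDerivAt (fun x => regIncBeta a b x ^ 2)
      (2 * (betaFn a b)⁻¹ * (betaIntegrand a b x * regIncBeta a b x)) x := fun x hx => by
    refine ((hasDerivAt_regIncBeta ha hb hx).pow 2).congr_deriv ?_
    ring
  have h := integral_eq_sub_of_hasDerivAt_of_le zero_le_one
    ((continuousOn_regIncBeta ha hb).pow 2) hderiv
    ((intervalIntegrable_betaIntegrand_mul_regIncBeta ha hb).const_mul _)
  rw [intervalIntegral.integral_const_mul] at h
  simp only [Pi.pow_apply, regIncBeta_one hB, regIncBeta_zero] at h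
  field_simp at h ⊢
  linarith

lemma integral_regIncBeta_sq_eq_one_sub (ha : 0 < a) (hb : 0 < b) :
    ∫ x in (0:ℝ)..1, regIncBeta a b x ^ 2 =
      1 - 2 * (betaFn a b)⁻¹ *
        ∫ x in (0:ℝ)..1, x * (betaIntegrand a b x * regIncBeta a b x) := by
  have hF := continuousOn_regIncBeta ha hb
  have hF2 : IntervalIntegrable (fun x => regIncBeta a b x ^ 2) volume 0 1 :=
    (hF.pow 2).intervalIntegrable_of_Icc zero_le_one
  have hxfF : IntervalIntegrable (fun x => x * (betaIntegrand a b x * regIncBeta a b x))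
      volume 0 1 :=
    (intervalIntegrable_betaIntegrand_mul_regIncBeta ha hb).continuousOn_mul continuousOn_id
  have hderiv : ∀ x ∈ Ioo (0:ℝ) 1, HasDerivAt (fun x => x * regIncBeta a b x ^ 2)
      (regIncBeta a b x ^ 2 +
        2 * (betaFn a b)⁻¹ * (x * (betaIntegrand a b x * regIncBeta a b x))) x := fun x hx => by
    refine ((hasDerivAt_id x).mul ((hasDerivAt_regIncBeta ha hb hx).pow 2)).congr_deriv ?_
    simp only [id, Pi.pow_apply]
    ring
  have h := integral_eq_sub_of_hasDerivAt_of_le zero_le_one (continuousOn_id.mul (hF.pow 2))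
    hderiv (hF2.add (hxfF.const_mul _))
  rw [integral_add hF2 (hxfF.const_mul _), intervalIntegral.integral_const_mul] at h
  simp only [Pi.mul_apply, Pi.pow_apply, id, regIncBeta_one (betaFn_pos ha hb).ne'] at h
  linarith

lemma add_mul_integral_mul_betaIntegrand_mul_regIncBeta (ha : 0 < a) (hb : 0 < b) :
    (a + b) * ∫ x in (0:ℝ)..1, x * (betaIntegrand a b x * regIncBeta a b x) =
      a * (∫ x in (0:ℝ)..1, betaIntegrand a b x * regIncBeta a b x) +
        betaFn (2 * a) (2 * b) / betaFn a b := by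
  have hfF := intervalIntegrable_betaIntegrand_mul_regIncBeta ha hb
  have hf₂ := intervalIntegrable_betaIntegrand (mul_pos two_pos ha) (mul_pos two_pos hb)
  have hxfF : IntervalIntegrable (fun x => x * (betaIntegrand a b x * regIncBeta a b x))
      volume 0 1 :=
    hfF.continuousOn_mul continuousOn_id
  have hpoly : IntervalIntegrable
      (fun x => (a - (a + b) * x) * (betaIntegrand a b x * regIncBeta a b x)) volume 0 1 :=
    hfF.continuousOn_mul (by fun_prop)
  have hG : ContinuousOn (fun x => x ^ a * (1 - x) ^ b * regIncBeta a b x) (Icc 0 1) :=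
    (((Real.continuous_rpow_const ha.le).mul ((Real.continuous_rpow_const hb.le).comp
      (continuous_const.sub continuous_id))).continuousOn).mul (continuousOn_regIncBeta ha hb)
  have hderiv : ∀ x ∈ Ioo (0:ℝ) 1,
      HasDerivAt (fun x => x ^ a * (1 - x) ^ b * regIncBeta a b x)
      ((a - (a + b) * x) * (betaIntegrand a b x * regIncBeta a b x) +
        (betaFn a b)⁻¹ * betaIntegrand (2 * a) (2 * b) x) x := fun x hx => by
    refine ((hasDerivAt_rpow_mul_one_sub_rpow hx).mul
      (hasDerivAt_regIncBeta ha hb hx)).congr_deriv ?_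
    rw [betaIntegrand_two_mul hx]
    ring
  have h := integral_eq_sub_of_hasDerivAt_of_le zero_le_one hG hderiv
    (hpoly.add (hf₂.const_mul _))
  have hsplit : ∫ x in (0:ℝ)..1, (a - (a + b) * x) * (betaIntegrand a b x * regIncBeta a b x) =
      a * (∫ x in (0:ℝ)..1, betaIntegrand a b x * regIncBeta a b x) -
        (a + b) * ∫ x in (0:ℝ)..1, x * (betaIntegrand a b x * regIncBeta a b x) := by
    rw [← intervalIntegral.integral_const_mul, ← intervalIntegral.integral_const_mul,
      ← integral_sub (hfF.const_mul a) (hxfF.const_mul (a + b))]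
    congr 1 with x
    ring
  rw [integral_add hpoly (hf₂.const_mul _), intervalIntegral.integral_const_mul,
    ← betaFn_eq_integral, hsplit, sub_self, Real.zero_rpow ha.ne', Real.zero_rpow hb.ne'] at h
  field_simp at h ⊢
  linarith

end Integrals

theorem integral_regIncBeta_sq {a b : ℝ} (ha : 0 < a) (hb : 0 < b) :
    ∫ x in (0:ℝ)..1, regIncBeta a b x ^ 2 =
      (a + b)⁻¹ * (b - 2 * betaFn (2 * a) (2 * b) / betaFn a b ^ 2) := by
  have hB := (betaFn_pos ha hb).ne'
  have h₁ := integral_betaIntegrand_mul_regIncBeta ha hb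
  have h₂ := add_mul_integral_mul_betaIntegrand_mul_regIncBeta ha hb
  rw [h₁] at h₂
  rw [integral_regIncBeta_sq_eq_one_sub ha hb]
  generalize ∫ x in (0:ℝ)..1, x * (betaIntegrand a b x * regIncBeta a b x) = J at h₂ ⊢
  have hab : a + b ≠ 0 := (add_pos ha hb).ne'
  field_simp at h₂ ⊢
  linear_combination -h₂

/-- `∫₀¹ I(μ,μ';t)² dt = (μ' − 2B(2μ,2μ')/B(μ,μ')²)/(μ+μ')`;
equivalently, `E[max{Y,Z}] = 1 − ∫₀¹ I(μ,μ';t)² dt` has the stated closed form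
for independent `Y, Z ~ Beta(μ,μ')`. -/
theorem stmt11 (m m' : ℝ) (hm : 0 < m) (hm' : 0 < m') :
    (∫ t in (0:ℝ)..1, regIncBeta m m' t ^ 2) =
      (m + m')⁻¹ * (m' - 2 * betaFn (2 * m) (2 * m') / (betaFn m m') ^ 2) ∧
    1 - ∫ t in (0:ℝ)..1, regIncBeta m m' t ^ 2 =
      m / (m + m') + 2 * betaFn (2 * m) (2 * m') / ((m + m') * (betaFn m m') ^ 2) := by
  have h := integral_regIncBeta_sq hm hm'
  refine ⟨h, ?_⟩
  rw [h]
  field_simp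
  ring
end
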